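/- Let α_t, ᾱ_t, ᾱ_{t−1} ∈ (0,1) with ᾱ_t = α_t ᾱ_{t−1}, and let ε^u, ε^c ∈ ℝ^d, w ∈ ℝ. Define ε^w = ε^u + w(ε^c − ε^u). Then the DDIM update with noise ε^w applied to x_t equals the DDIM update with noise ε^u applied to the calibrated point x̂_t = x_t − w(√(1−ᾱ_t) − √(α_t − ᾱ_t))(ε^c − ε^u). That is, (√ᾱ_{t−1}/√ᾱ_t)·x_t + (√(1−ᾱ_{t−1}) − √(1−ᾱ_t)/√α_t)·ε^w = (√ᾱ_{t−1}/√ᾱ_t)·x̂_t + (√(1−ᾱ_{t−1}) − √(1−ᾱ_t)/√α_t)·ε^u. -/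

import Mathlib

/-! Both sides are affine in `εc - εu`, so the identity reduces to one scalar relation between the
DDIM noise coefficient and the calibration shift `ξ_t = √(1-ᾱ_t) - √(α_t-ᾱ_t)`. It holds because
`√ᾱ_t = √α_t √ᾱ_{t-1}` and `√(α_t - ᾱ_t) = √α_t √(1-ᾱ_{t-1})`, so that `√ᾱ_{t-1}/√ᾱ_t = 1/√α_t`. -/

open Real

theorem smul_add_smul_guidance_eq {R M : Type*} [CommRing R] [AddCommGroup M] [Module R M]
    (a c w k : R) (x εu εc : M) (hk : c * w = -(a * k)) :
    a • x + c • (εu + w • (εc - εu)) = a • (x - k • (εc - εu)) + c • εu := by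
  have hshift : c • w • (εc - εu) = -(a • k • (εc - εu)) := by
    rw [smul_smul, smul_smul, hk, neg_smul]
  rw [smul_add, hshift, smul_sub a x]
  abel

theorem sqrt_div_sqrt_mul_calibration {α b : ℝ} (hα : 0 < α) (hb : 0 < b) :
    √b / √(α * b) * (√(1 - α * b) - √(α - α * b)) = √(1 - α * b) / √α - √(1 - b) := by
  have hsα : √α ≠ 0 := by positivity
  have hsb : √b ≠ 0 := by positivity
  rw [show α - α * b = α * (1 - b) by ring, sqrt_mul hα.le, sqrt_mul hα.le]
  field_simp

theorem stmt_8_general {d : ℕ} (αt abt ab1 w : ℝ)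
    (hαt : αt ∈ Set.Ioo (0:ℝ) 1)
    (hab1 : ab1 ∈ Set.Ioo (0:ℝ) 1) (h : abt = αt * ab1)
    (x εu εc : EuclideanSpace ℝ (Fin d)) :
    (Real.sqrt ab1 / Real.sqrt abt) • x
        + (Real.sqrt (1 - ab1) - Real.sqrt (1 - abt) / Real.sqrt αt) •
            (εu + w • (εc - εu)) =
      (Real.sqrt ab1 / Real.sqrt abt) •
          (x - (w * (Real.sqrt (1 - abt) - Real.sqrt (αt - abt))) • (εc - εu))
        + (Real.sqrt (1 - ab1) - Real.sqrt (1 - abt) / Real.sqrt αt) • εu := by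
  subst h
  apply smul_add_smul_guidance_eq
  rw [mul_left_comm, sqrt_div_sqrt_mul_calibration hαt.1 hab1.1]
  ring

theorem stmt_8 {d : ℕ} (αt abt ab1 w : ℝ)
    (hαt : αt ∈ Set.Ioo (0:ℝ) 1) (habt : abt ∈ Set.Ioo (0:ℝ) 1)
    (hab1 : ab1 ∈ Set.Ioo (0:ℝ) 1) (h : abt = αt * ab1)
    (x εu εc : EuclideanSpace ℝ (Fin d)) :
    (Real.sqrt ab1 / Real.sqrt abt) • x
        + (Real.sqrt (1 - ab1) - Real.sqrt (1 - abt) / Real.sqrt αt) •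
            (εu + w • (εc - εu)) =
      (Real.sqrt ab1 / Real.sqrt abt) •
          (x - (w * (Real.sqrt (1 - abt) - Real.sqrt (αt - abt))) • (εc - εu))
        + (Real.sqrt (1 - ab1) - Real.sqrt (1 - abt) / Real.sqrt αt) • εu :=
  stmt_8_general αt abt ab1 w hαt hab1 h x εu εc
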